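/- Let p be a prime and w ∈ V_5. Then #{ ([q],[ℓ]) ∈ P(V_2^*)×P(V_1^*) : (w, q²ℓ) = 0 } = (p²+p+1) + p·#{ [q] ∈ P(V_2^*) : q² is apolar to w }. -/

import Mathlib

/-! For `q ≠ 0`, `l ↦ (w, q²l)` is a linear functional on the plane `V₁^*`. If it vanishes, i.e.
`q²` is apolar to `w`, all `p + 1` points `[l]` of the projective line are zeros of it; otherwise
its kernel is a line and contributes a single point `[l]`. Summing `1 + p · [q² apolar to w]`
over the `p² + p + 1` points `[q]` gives the count. -/

open Finset

/-- Multiplication of binary forms encoded by coefficient tuples: a binary form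
`∑ i, f i • x^(a-i) * y^i` of degree `a` is encoded as the tuple `f : Fin (a+1) → k`,
and multiplication of forms is convolution of coefficient tuples. -/
def formMul {k : Type*} [CommRing k] {a b : ℕ} (f : Fin (a + 1) → k)
    (g : Fin (b + 1) → k) : Fin (a + b + 1) → k :=
  fun i => ∑ q : Fin (a + 1) × Fin (b + 1),
    if (q.1 : ℕ) + (q.2 : ℕ) = (i : ℕ) then f q.1 * g q.2 else 0

/-- The pairing `(w, v) = ∑ i, w i * v i` between `V_n` and `V_n^*`. -/
def pair {k : Type*} [CommRing k] {n : ℕ} (w v : Fin (n + 1) → k) : k :=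
  ∑ i, w i * v i

open scoped LinearAlgebra.Projectivization

namespace Projectivization

section DivisionRing

variable {K V W : Type*} [DivisionRing K] [AddCommGroup V] [Module K V] [AddCommGroup W]
  [Module K W]

lemma exists_mk_eq_and_iff {P : V → Prop} (hP : ∀ (c : Kˣ) (v : V), P (c • v) ↔ P v)
    (x : ℙ K V) : (∃ (v : V) (hv : v ≠ 0), mk K v hv = x ∧ P v) ↔ P x.rep := by
  constructor
  · rintro ⟨v, hv, rfl, h⟩
    obtain ⟨c, hc⟩ := exists_smul_eq_mk_rep K v hv
    rwa [← hc, hP]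
  · exact fun h => ⟨x.rep, x.rep_nonzero, mk_rep x, h⟩

lemma exists_mk_eq_mk_eq_and_iff {P : V → W → Prop}
    (hPl : ∀ (c : Kˣ) (v : V) (u : W), P (c • v) u ↔ P v u)
    (hPr : ∀ (c : Kˣ) (v : V) (u : W), P v (c • u) ↔ P v u) (x : ℙ K V) (y : ℙ K W) :
    (∃ (v : V) (u : W) (hv : v ≠ 0) (hu : u ≠ 0),
      mk K v hv = x ∧ mk K u hu = y ∧ P v u) ↔ P x.rep y.rep := by
  constructor
  · rintro ⟨v, u, hv, hu, rfl, rfl, h⟩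
    obtain ⟨a, ha⟩ := exists_smul_eq_mk_rep K v hv
    obtain ⟨b, hb⟩ := exists_smul_eq_mk_rep K u hu
    rwa [← ha, ← hb, hPl, hPr]
  · exact fun h => ⟨x.rep, y.rep, x.rep_nonzero, y.rep_nonzero, mk_rep x, mk_rep y, h⟩

lemma rep_mem_iff_mem_range_map (U : Submodule K V) (y : ℙ K V) :
    y.rep ∈ U ↔ y ∈ Set.range (map U.subtype U.injective_subtype) := by
  constructor
  · intro h
    exact ⟨mk K ⟨y.rep, h⟩ (by simpa using y.rep_nonzero), by rw [map_mk]; exact mk_rep y⟩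
  · rintro ⟨z, rfl⟩
    induction z using ind with
    | h u hu =>
      obtain ⟨c, hc⟩ := exists_smul_eq_mk_rep K (U.subtype u) (by simpa using hu)
      rw [map_mk, ← hc, Units.smul_def]
      exact U.smul_mem _ u.2

noncomputable def equivRepMem (U : Submodule K V) : ℙ K U ≃ {y : ℙ K V // y.rep ∈ U} :=
  (Equiv.ofInjective _ (map_injective U.subtype U.injective_subtype)).trans
    (Equiv.subtypeEquivRight fun y => (rep_mem_iff_mem_range_map U y).symm)

end DivisionRing

variable {K V W : Type*} [Field K] [AddCommGroup V] [Module K V] [AddCommGroup W] [Module K W]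

lemma card_apply_rep_eq_zero [Finite K] [FiniteDimensional K V] {f : Module.Dual K V}
    (hf : f ≠ 0) {n : ℕ} (hV : Module.finrank K V = n + 1) :
    Nat.card {y : ℙ K V // f y.rep = 0} = ∑ i ∈ range n, Nat.card K ^ i := by
  have hker : Module.finrank K (LinearMap.ker f) = n := by
    have := Module.Dual.finrank_ker_add_one_of_ne_zero hf
    omega
  rw [← card_of_finrank K _ hker, Nat.card_congr (equivRepMem (LinearMap.ker f))]
  exact Nat.card_congr (Equiv.subtypeEquivRight fun y => LinearMap.mem_ker.symm)


lemma card_pairs_apply_rep_eq_zero [Finite K] [Finite V] [FiniteDimensional K W]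
    (hW : Module.finrank K W = 2) (φ : V → Module.Dual K W) :
    Nat.card {x : ℙ K V × ℙ K W // φ x.1.rep x.2.rep = 0} =
      Nat.card (ℙ K V) + Nat.card K * Nat.card {x : ℙ K V // φ x.rep = 0} := by
  classical
  have : Fintype (ℙ K V) := Fintype.ofFinite _
  have : Finite W := Module.finite_of_finite K
  have hfiber : ∀ x : ℙ K V, Nat.card {y : ℙ K W // φ x.rep y.rep = 0} =
      1 + Nat.card K * if φ x.rep = 0 then 1 else 0 := by
    intro x
    by_cases hx : φ x.rep = 0
    · simp only [hx, LinearMap.zero_apply, if_true, Nat.card_subtype_true,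
        card_of_finrank_two K W hW]
      ring
    · simp [card_apply_rep_eq_zero hx (n := 1) hW, hx]
  rw [Nat.card_congr (Equiv.subtypeProdEquivSigmaSubtype
      fun (x : ℙ K V) (y : ℙ K W) => φ x.rep y.rep = 0),
    Nat.card_sigma, sum_congr rfl fun x _ => hfiber x, sum_add_distrib, ← mul_sum, sum_boole,
    sum_const, card_univ, smul_eq_mul, mul_one, ← Fintype.card_subtype, Fintype.card_eq_nat_card,
    Fintype.card_eq_nat_card, Nat.cast_id]

end Projectivization

section BinaryForms

variable {k : Type*} [CommRing k] {a b : ℕ}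

lemma formMul_add_right (f : Fin (a + 1) → k) (g g' : Fin (b + 1) → k) :
    formMul f (g + g') = formMul f g + formMul f g' := by
  ext i
  simp only [formMul, Pi.add_apply, ← sum_add_distrib]
  refine sum_congr rfl fun x _ => ?_
  split_ifs <;> ring

lemma formMul_smul_right (c : k) (f : Fin (a + 1) → k) (g : Fin (b + 1) → k) :
    formMul f (c • g) = c • formMul f g := by
  ext i
  simp only [formMul, Pi.smul_apply, smul_eq_mul, mul_sum]
  refine sum_congr rfl fun x _ => ?_
  split_ifs <;> ring

lemma formMul_smul_left (c : k) (f : Fin (a + 1) → k) (g : Fin (b + 1) → k) :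
    formMul (c • f) g = c • formMul f g := by
  ext i
  simp only [formMul, Pi.smul_apply, smul_eq_mul, mul_sum]
  refine sum_congr rfl fun x _ => ?_
  split_ifs <;> ring

def apolarityFunctional (w : Fin (a + b + 1) → k) (g : Fin (a + 1) → k) :
    Module.Dual k (Fin (b + 1) → k) where
  toFun h := pair w (formMul g h)
  map_add' h h' := by
    simp only [formMul_add_right, pair, Pi.add_apply, mul_add, sum_add_distrib]
  map_smul' c h := by
    simp only [formMul_smul_right, pair, Pi.smul_apply, smul_eq_mul, RingHom.id_apply, mul_sum]
    exact sum_congr rfl fun i _ => by ring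

lemma apolarityFunctional_smul (w : Fin (a + b + 1) → k) (c : k) (g : Fin (a + 1) → k) :
    apolarityFunctional w (c • g) = c • apolarityFunctional w g := by
  refine LinearMap.ext fun h => ?_
  simp only [apolarityFunctional, LinearMap.coe_mk, AddHom.coe_mk, LinearMap.smul_apply,
    formMul_smul_left, pair, Pi.smul_apply, smul_eq_mul, mul_sum]
  exact sum_congr rfl fun i _ => by ring

end BinaryForms

/-- Fiber count for the morphism `ψ_{2²,1}` over `[w^⊥]₅`. -/
theorem stmt9 (p : ℕ) [Fact p.Prime] (w : Fin 6 → ZMod p) :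
    Nat.card {x : Projectivization (ZMod p) (Fin 3 → ZMod p) ×
        Projectivization (ZMod p) (Fin 2 → ZMod p) //
      ∃ (q : Fin 3 → ZMod p) (l : Fin 2 → ZMod p) (hq : q ≠ 0) (hl : l ≠ 0),
        Projectivization.mk (ZMod p) q hq = x.1 ∧
        Projectivization.mk (ZMod p) l hl = x.2 ∧
        pair w (formMul (formMul q q) l) = 0} =
    (p ^ 2 + p + 1) + p * Nat.card {x : Projectivization (ZMod p) (Fin 3 → ZMod p) //
      ∃ (q : Fin 3 → ZMod p) (hq : q ≠ 0), Projectivization.mk (ZMod p) q hq = x ∧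
        ∀ h : Fin 2 → ZMod p, pair w (formMul (formMul q q) h) = 0} := by
  set φ : (Fin 3 → ZMod p) → Module.Dual (ZMod p) (Fin 2 → ZMod p) :=
    fun q => apolarityFunctional w (formMul q q)
  have hφ_smul (c : ZMod p) (q : Fin 3 → ZMod p) : φ (c • q) = (c * c) • φ q := by
    simp only [φ, formMul_smul_left, formMul_smul_right, apolarityFunctional_smul, smul_smul]
  have hpairs (x : ℙ (ZMod p) (Fin 3 → ZMod p) × ℙ (ZMod p) (Fin 2 → ZMod p)) :
      (∃ (q : Fin 3 → ZMod p) (l : Fin 2 → ZMod p) (hq : q ≠ 0) (hl : l ≠ 0),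
        Projectivization.mk (ZMod p) q hq = x.1 ∧ Projectivization.mk (ZMod p) l hl = x.2 ∧
        pair w (formMul (formMul q q) l) = 0) ↔ φ x.1.rep x.2.rep = 0 :=
    Projectivization.exists_mk_eq_mk_eq_and_iff (P := fun q l => φ q l = 0)
      (fun c q l => by simp [Units.smul_def, hφ_smul]) (fun c q l => by simp [Units.smul_def])
      x.1 x.2
  have hapolar (x : ℙ (ZMod p) (Fin 3 → ZMod p)) :
      (∃ (q : Fin 3 → ZMod p) (hq : q ≠ 0), Projectivization.mk (ZMod p) q hq = x ∧
        ∀ h : Fin 2 → ZMod p, pair w (formMul (formMul q q) h) = 0) ↔ φ x.rep = 0 :=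
    (Projectivization.exists_mk_eq_and_iff (P := fun q => ∀ h, φ q h = 0)
        (fun c q => by simp [Units.smul_def, hφ_smul]) x).trans
      (LinearMap.ext_iff (f := φ x.rep) (g := 0)).symm
  rw [Nat.card_congr (Equiv.subtypeEquivRight hpairs),
    Nat.card_congr (Equiv.subtypeEquivRight hapolar),
    Projectivization.card_pairs_apply_rep_eq_zero (by simp) φ,
    Projectivization.card_of_finrank _ _ (n := 3) (by simp), Nat.card_zmod]
  rw [sum_range_succ, sum_range_succ, sum_range_one]
  ring
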